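/- For all large enough T, the learning-rate schedule β_1 = 1/T^{c_0}, β_t = (c_1 log T/T)·min{β_1(1+c_1 log T/T)^t, 1} satisfies ᾱ_T ≤ 1/T^{c_2} for some numerical constant c_2 ≥ 1000. Moreover, there exists a universal constant C > 0 such that for any d ≥ 1 and any 2 ≤ t ≤ T with d(1−α_t)/(α_t−ᾱ_t) ≤ 1/C, one has | ((1−ᾱ_t)/(α_t−ᾱ_t))^{d/2} − [1 + d(1−α_t)/(2(α_t−ᾱ_t)) + d(d−2)(1−α_t)²/(8(α_t−ᾱ_t)²)] | ≤ C·d³·((1−α_t)/(α_t−ᾱ_t))³. -/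

import Mathlib

/-!
Formalization setup for "Accelerating Convergence of Score-Based Diffusion Models, Provably".

We work on `ℝ^d = EuclideanSpace ℝ (Fin d)`.  The data distribution is described by a
Lebesgue density `pdata`.  The forward process is `X_t = √ᾱ_t • X₀ + √(1-ᾱ_t) • W̄_t`,
whose density `q_t` is given by the explicit Gaussian convolution formula.  Samplers are
described as laws (measures) obtained by pushing the standard Gaussian `N(0, I_d)` through
the corresponding update maps.
-/

open MeasureTheory Real Filter
open scoped ENNReal NNReal BigOperators RealInnerProductSpace Topology

noncomputable section

namespace Paper

/-- `ℝ^d` with the Euclidean structure. -/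
abbrev Vec (d : ℕ) : Type := EuclideanSpace ℝ (Fin d)

variable {d : ℕ}

/-- Isotropic Gaussian density with per-coordinate variance `v` on `ℝ^d`. -/
def gaussPdf (d : ℕ) (v : ℝ) (x : Vec d) : ℝ :=
  (2 * π * v) ^ (-(d : ℝ) / 2) * Real.exp (-‖x‖ ^ 2 / (2 * v))

/-- The standard Gaussian measure `N(0, I_d)` on `ℝ^d`. -/
def stdGaussian (d : ℕ) : Measure (Vec d) :=
  volume.withDensity fun x => ENNReal.ofReal (gaussPdf d 1 x)

/-- The learning-rate schedule: `β₁ = 1/T^{c₀}` and, for `t > 1`,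
`β_t = (c₁ log T / T) · min{β₁ (1 + c₁ log T / T)^t, 1}`. -/
def beta (T : ℕ) (c0 c1 : ℝ) (t : ℕ) : ℝ :=
  if t ≤ 1 then 1 / (T : ℝ) ^ c0
  else c1 * Real.log T / T * min (1 / (T : ℝ) ^ c0 * (1 + c1 * Real.log T / T) ^ t) 1

/-- `α_t = 1 - β_t`. -/
def alpha (T : ℕ) (c0 c1 : ℝ) (t : ℕ) : ℝ := 1 - beta T c0 c1 t

/-- `ᾱ_t = ∏_{k=1}^t α_k`. -/
def alphaBar (T : ℕ) (c0 c1 : ℝ) (t : ℕ) : ℝ := ∏ k ∈ Finset.Icc 1 t, alpha T c0 c1 k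

/-- Density of `scale • X₀ + √v • W` when `X₀` has density `pdata` and `W ~ N(0, I_d)`. -/
def qGen (pdata : Vec d → ℝ) (scale v : ℝ) (x : Vec d) : ℝ :=
  ∫ x0, pdata x0 * gaussPdf d v (x - scale • x0)

/-- Density `q_t` of `X_t = √a • X₀ + √(1-a) • W̄`  (with `a = ᾱ_t`). -/
def qFun (pdata : Vec d → ℝ) (a : ℝ) (x : Vec d) : ℝ :=
  qGen pdata (Real.sqrt a) (1 - a) x

/-- Conditional density `p_{X₀|X_t}(x₀|x)`. -/
def condPdf (pdata : Vec d → ℝ) (a : ℝ) (x0 x : Vec d) : ℝ :=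
  pdata x0 * gaussPdf d (1 - a) (x - Real.sqrt a • x0) / qFun pdata a x

/-- The score function `s_t⋆ = ∇ log q_t`. -/
def scoreFun (pdata : Vec d → ℝ) (a : ℝ) (x : Vec d) : Vec d :=
  gradient (fun y => Real.log (qFun pdata a y)) x

/-- `g_t(x) = ∫ (x - √a • x₀) p_{X₀|X_t}(x₀|x) dx₀`. -/
def gFun (pdata : Vec d → ℝ) (a : ℝ) (x : Vec d) : Vec d :=
  ∫ x0, condPdf pdata a x0 x • (x - Real.sqrt a • x0)

/-- `J_t(x) = ∂/∂x (-(1-ᾱ_t) s_t⋆(x))`. -/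
def Jmat (pdata : Vec d → ℝ) (a : ℝ) (x : Vec d) : Vec d →L[ℝ] Vec d :=
  fderiv ℝ (fun y => -((1 - a) • scoreFun pdata a y)) x

/-- Total-variation distance between two densities: `½∫|f - g|`. -/
def tvFun (f g : Vec d → ℝ) : ℝ := (∫ x, |f x - g x|) / 2

/-- KL divergence between two densities: `∫ f log (f/g)`. -/
def klFun (f g : Vec d → ℝ) : ℝ := ∫ x, f x * Real.log (f x / g x)

/-- The Lebesgue density of a measure. -/
def densityOf (μ : Measure (Vec d)) (x : Vec d) : ℝ := (μ.rnDeriv volume x).toReal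

/-- `φ_t(x) = x - ((1-α_{t+1})/2) • s_t(x)`. -/
def phiMap (T : ℕ) (c0 c1 : ℝ) (s : ℕ → Vec d → Vec d) (t : ℕ) (x : Vec d) : Vec d :=
  x - ((1 - alpha T c0 c1 (t + 1)) / 2) • s t x

/-- `Φ_t(x) = √α_{t+1} • φ_t(x)` (the mid-point map of the accelerated ODE sampler). -/
def PhiMap (T : ℕ) (c0 c1 : ℝ) (s : ℕ → Vec d → Vec d) (t : ℕ) (x : Vec d) : Vec d :=
  Real.sqrt (alpha T c0 c1 (t + 1)) • phiMap T c0 c1 s t x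

/-- `ψ_t(x) = x + ((1-α_t)/2) s_t(x)
      + ((1-α_t)²/(4(1-α_{t+1}))) (s_t(x) - √α_{t+1} s_{t+1}(Φ_t(x)/√α_{t+1}))`. -/
def psiMap (T : ℕ) (c0 c1 : ℝ) (s : ℕ → Vec d → Vec d) (t : ℕ) (x : Vec d) : Vec d :=
  x + ((1 - alpha T c0 c1 t) / 2) • s t x +
    ((1 - alpha T c0 c1 t) ^ 2 / (4 * (1 - alpha T c0 c1 (t + 1)))) •
      (s t x - Real.sqrt (alpha T c0 c1 (t + 1)) • s (t + 1) (PhiMap T c0 c1 s t x))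

/-- One step of the accelerated deterministic sampler:
`Y_{t-1} = Ψ_t(Y_t, Φ_t(Y_t)) = (1/√α_t) • ψ_t(Y_t)`. -/
def odeStep (T : ℕ) (c0 c1 : ℝ) (s : ℕ → Vec d → Vec d) (t : ℕ) (x : Vec d) : Vec d :=
  (Real.sqrt (alpha T c0 c1 t))⁻¹ • psiMap T c0 c1 s t x

/-- Law of `Y_{T-k}` for the accelerated deterministic sampler started from `Y_T ~ N(0, I_d)`. -/
def odeLawAux (d T : ℕ) (c0 c1 : ℝ) (s : ℕ → Vec d → Vec d) : ℕ → Measure (Vec d)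
  | 0 => stdGaussian d
  | k + 1 => Measure.map (odeStep T c0 c1 s (T - k)) (odeLawAux d T c0 c1 s k)

/-- Law `p_t` of `Y_t` for the accelerated deterministic sampler. -/
def odeLaw (d T : ℕ) (c0 c1 : ℝ) (s : ℕ → Vec d → Vec d) (t : ℕ) : Measure (Vec d) :=
  odeLawAux d T c0 c1 s (T - t)

/-- Deterministic trajectory `y_{T-k}` of the accelerated ODE sampler started at `yT`. -/
def odeSeqAux (d T : ℕ) (c0 c1 : ℝ) (s : ℕ → Vec d → Vec d) (yT : Vec d) : ℕ → Vec d
  | 0 => yT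
  | k + 1 => odeStep T c0 c1 s (T - k) (odeSeqAux d T c0 c1 s yT k)

/-- The point `y_t` of the deterministic trajectory started at `yT`. -/
def odeSeq (d T : ℕ) (c0 c1 : ℝ) (s : ℕ → Vec d → Vec d) (yT : Vec d) (t : ℕ) : Vec d :=
  odeSeqAux d T c0 c1 s yT (T - t)

/-- One step of the accelerated stochastic sampler:
`Y_{t-1} = (1/√α_t) • (Y_t⁺ + (1-α_t) s_t(Y_t⁺) + √((1-α_t)/2) Z_t⁺)` where
`Y_t⁺ = Y_t + √((1-α_t)/2) Z_t`. -/
def sdeStep (T : ℕ) (c0 c1 : ℝ) (s : ℕ → Vec d → Vec d) (t : ℕ) (x z zp : Vec d) : Vec d :=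
  (Real.sqrt (alpha T c0 c1 t))⁻¹ •
    (x + Real.sqrt ((1 - alpha T c0 c1 t) / 2) • z +
      (1 - alpha T c0 c1 t) • s t (x + Real.sqrt ((1 - alpha T c0 c1 t) / 2) • z) +
        Real.sqrt ((1 - alpha T c0 c1 t) / 2) • zp)

/-- Law of `Y_{T-k}` for the accelerated stochastic sampler started from `Y_T ~ N(0, I_d)`. -/
def sdeLawAux (d T : ℕ) (c0 c1 : ℝ) (s : ℕ → Vec d → Vec d) : ℕ → Measure (Vec d)
  | 0 => stdGaussian d
  | k + 1 => Measure.map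
      (fun p : Vec d × Vec d × Vec d => sdeStep T c0 c1 s (T - k) p.1 p.2.1 p.2.2)
      ((sdeLawAux d T c0 c1 s k).prod ((stdGaussian d).prod (stdGaussian d)))

/-- Law `p_t` of `Y_t` for the accelerated stochastic sampler. -/
def sdeLaw (d T : ℕ) (c0 c1 : ℝ) (s : ℕ → Vec d → Vec d) (t : ℕ) : Measure (Vec d) :=
  sdeLawAux d T c0 c1 s (T - t)

/-- Pointwise score estimation error `ε_{score,t}(x) = ‖s_t(x) - s_t⋆(x)‖₂`. -/
def epsScore (T : ℕ) (c0 c1 : ℝ) (pdata : Vec d → ℝ) (s : ℕ → Vec d → Vec d)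
    (t : ℕ) (x : Vec d) : ℝ :=
  ‖s t x - scoreFun pdata (alphaBar T c0 c1 t) x‖

/-- Pointwise Jacobian estimation error `ε_{Jacobi,t}(x) = ‖J_{s_t}(x) - J_{s_t⋆}(x)‖`. -/
def epsJacobi (T : ℕ) (c0 c1 : ℝ) (pdata : Vec d → ℝ) (s : ℕ → Vec d → Vec d)
    (t : ℕ) (x : Vec d) : ℝ :=
  ‖fderiv ℝ (s t) x - fderiv ℝ (scoreFun pdata (alphaBar T c0 c1 t)) x‖

/-- `θ(y) = max{-log q_t(y)/(d log T), c₆}`. -/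
def thetaY (T : ℕ) (c0 c1 c6 : ℝ) (pdata : Vec d → ℝ) (t : ℕ) (y : Vec d) : ℝ :=
  max (-(Real.log (qFun pdata (alphaBar T c0 c1 t) y)) / ((d : ℝ) * Real.log T)) c6

/-- `A_t(x)`. -/
def AtQ (pdata : Vec d → ℝ) (a : ℝ) (x : Vec d) : ℝ :=
  (1 - a)⁻¹ * ∫ x0, condPdf pdata a x0 x * ‖x - Real.sqrt a • x0‖ ^ 2

/-- `B_t(x)`. -/
def BtQ (pdata : Vec d → ℝ) (a : ℝ) (x : Vec d) : ℝ :=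
  (1 - a)⁻¹ * ‖∫ x0, condPdf pdata a x0 x • (x - Real.sqrt a • x0)‖ ^ 2

/-- `C_t(x)`. -/
def CtQ (pdata : Vec d → ℝ) (a : ℝ) (x : Vec d) : ℝ :=
  ((1 - a) ^ 2)⁻¹ * ∫ x0, condPdf pdata a x0 x * ‖x - Real.sqrt a • x0‖ ^ 4

/-- `D_t(x)`. -/
def DtQ (pdata : Vec d → ℝ) (a : ℝ) (x : Vec d) : ℝ :=
  ((1 - a) ^ 2)⁻¹ * ∫ x0, condPdf pdata a x0 x * ⟪gFun pdata a x, x - Real.sqrt a • x0⟫ ^ 2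

/-- `E_t(x)`. -/
def EtQ (pdata : Vec d → ℝ) (a : ℝ) (x : Vec d) : ℝ :=
  ((1 - a) ^ 2)⁻¹ * ∫ x0, condPdf pdata a x0 x *
    (‖x - Real.sqrt a • x0‖ ^ 2 * ⟪gFun pdata a x, x - Real.sqrt a • x0⟫)

/-- The main (estimation-error-free) term appearing in the density-ratio expansions
of Lemma 6 (eqns (xt) and (yt)). -/
def mainTerm (d T : ℕ) (c0 c1 : ℝ) (pdata : Vec d → ℝ) (t : ℕ) (x : Vec d) : ℝ :=
  1 + (1 - alpha T c0 c1 t) *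
        ((d : ℝ) + BtQ pdata (alphaBar T c0 c1 t) x - AtQ pdata (alphaBar T c0 c1 t) x) /
        (2 * (1 - alphaBar T c0 c1 t)) +
    (1 - alpha T c0 c1 t) ^ 2 / (8 * (1 - alphaBar T c0 c1 t) ^ 2) *
      ((d : ℝ) * ((d : ℝ) + 2) +
        (4 + 2 * (d : ℝ)) *
          (BtQ pdata (alphaBar T c0 c1 t) x - AtQ pdata (alphaBar T c0 c1 t) x) -
        BtQ pdata (alphaBar T c0 c1 t) x ^ 2 + CtQ pdata (alphaBar T c0 c1 t) x +
        2 * DtQ pdata (alphaBar T c0 c1 t) x - 3 * EtQ pdata (alphaBar T c0 c1 t) x +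
        AtQ pdata (alphaBar T c0 c1 t) x * BtQ pdata (alphaBar T c0 c1 t) x)

/-- `μ̂_t⋆(x) = (1/√α_t)(x + (1-α_t) s_t⋆(x))`, with `al = α_t` and `a = ᾱ_t`. -/
def muHatStar (pdata : Vec d → ℝ) (al a : ℝ) (x : Vec d) : Vec d :=
  (Real.sqrt al)⁻¹ • (x + (1 - al) • scoreFun pdata a x)

/-- Conditional law of `H_{t-1}` given `H_t = x` for the auxiliary process
`H_{t-1} = μ̂_t⋆(H_t) + √((1-α_t)/(2α_t)) (Z_t - ((1-α_t)/(1-ᾱ_t)) J_t(H_t) Z_t + Z_t⁺)`. -/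
def auxKernel (d T : ℕ) (c0 c1 : ℝ) (pdata : Vec d → ℝ) (t : ℕ) (x : Vec d) :
    Measure (Vec d) :=
  Measure.map
    (fun p : Vec d × Vec d =>
      muHatStar pdata (alpha T c0 c1 t) (alphaBar T c0 c1 t) x +
        Real.sqrt ((1 - alpha T c0 c1 t) / (2 * alpha T c0 c1 t)) •
          (p.1 -
            ((1 - alpha T c0 c1 t) / (1 - alphaBar T c0 c1 t)) •
              (Jmat pdata (alphaBar T c0 c1 t) x) p.1 +
            p.2))
    ((stdGaussian d).prod (stdGaussian d))

/-- Conditional law of `Y_{t-1}` given `Y_t = x` for the accelerated stochastic sampler. -/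
def sdeKernel (d T : ℕ) (c0 c1 : ℝ) (s : ℕ → Vec d → Vec d) (t : ℕ) (x : Vec d) :
    Measure (Vec d) :=
  Measure.map (fun p : Vec d × Vec d => sdeStep T c0 c1 s t x p.1 p.2)
    ((stdGaussian d).prod (stdGaussian d))

/-- Reverse conditional density `p_{X_{t-1}|X_t}(x'|x)` of the forward chain. -/
def pRev (d T : ℕ) (c0 c1 : ℝ) (pdata : Vec d → ℝ) (t : ℕ) (xprev x : Vec d) : ℝ :=
  qFun pdata (alphaBar T c0 c1 (t - 1)) xprev *
      gaussPdf d (1 - alpha T c0 c1 t) (x - Real.sqrt (alpha T c0 c1 t) • xprev) /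
    qFun pdata (alphaBar T c0 c1 t) x

end Paper

/-!
Take `c₀ = 1`, `c₁ = 4000` and `δ = c₁ log T / T`, which is `< 1` once `T ≥ 10⁸`. Then every
`β_k` lies in `(0, 1)`, and for `k > T / 1000` one has `(1 + δ)^k ≥ T`, so the minimum defining
`β_k` is `1` and `β_k = δ`. Hence `ᾱ_T ≤ exp (-∑ β_k) ≤ exp (-(T - T / 1000) δ) ≤ T^{-1000}`.

For the expansion, `(1 - ᾱ_t)/(α_t - ᾱ_t) = 1 + r` with `r = (1 - α_t)/(α_t - ᾱ_t) ≥ 0`, and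
`(1 + r)^s = exp (s log (1 + r))` is expanded to second order in `s r` from the second-order
Taylor expansions of `log (1 + r)` and `exp`, whose cubic remainders give the `s³ r³` error.
-/

namespace Paper

lemma abs_log_one_add_sub_le {r : ℝ} (hr0 : 0 ≤ r) (hr : r ≤ 1 / 2) :
    |log (1 + r) - (r - r ^ 2 / 2)| ≤ 2 * r ^ 3 := by
  have h := Real.abs_log_sub_add_sum_range_le (x := -r)
    (by rw [abs_neg, abs_of_nonneg hr0]; linarith) 2
  norm_num [Finset.sum_range_succ, abs_of_nonneg hr0] at h
  calc |log (1 + r) - (r - r ^ 2 / 2)| = |-r + r ^ 2 / 2 + log (1 + r)| := by ring_nf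
    _ ≤ r ^ 3 / (1 - r) := h
    _ ≤ 2 * r ^ 3 := by
        rw [div_le_iff₀ (by linarith)]
        nlinarith [pow_nonneg hr0 3]

lemma abs_exp_sub_quadratic_le {u : ℝ} (hu : |u| ≤ 1) :
    |exp u - (1 + u + u ^ 2 / 2)| ≤ |u| ^ 3 := by
  have h := Real.exp_bound hu (n := 3) (by norm_num)
  norm_num [Finset.sum_range_succ, Nat.factorial] at h
  exact h.trans (by nlinarith [pow_nonneg (abs_nonneg u) 3])

lemma abs_one_add_rpow_sub_quadratic_le {s r : ℝ} (hs : 1 / 2 ≤ s) (hr : 0 ≤ r)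
    (hsr : s * r ≤ 1 / 8) :
    |(1 + r) ^ s - (1 + s * r + s * (s - 1) / 2 * r ^ 2)| ≤ 11 * s ^ 3 * r ^ 3 := by
  have hr4 : r ≤ 1 / 4 := by nlinarith
  set L := log (1 + r)
  have hL := abs_log_one_add_sub_le hr (by linarith)
  have hL0 : 0 ≤ L := Real.log_nonneg (by linarith)
  have hLr : L ≤ r := by linarith [Real.log_le_sub_one_of_pos (by linarith : (0 : ℝ) < 1 + r)]
  have hu0 : 0 ≤ s * L := by positivity
  have hur : s * L ≤ s * r := by gcongr
  have hexp : |exp (s * L) - (1 + s * L + (s * L) ^ 2 / 2)| ≤ (s * r) ^ 3 :=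
    (abs_exp_sub_quadratic_le (by rw [abs_of_nonneg hu0]; linarith)).trans
      (by rw [abs_of_nonneg hu0]; gcongr)
  have hsq : |(s * r) ^ 2 - (s * L) ^ 2| ≤ 2 * s ^ 2 * r ^ 3 := by
    have hgap : s * r - s * L ≤ s * r ^ 2 := by
      have := (abs_le.1 hL).1
      nlinarith
    rw [abs_of_nonneg (by nlinarith)]
    nlinarith
  have hsplit : (1 + s * L + (s * L) ^ 2 / 2) - (1 + s * r + s * (s - 1) / 2 * r ^ 2)
      = s * (L - (r - r ^ 2 / 2)) - ((s * r) ^ 2 - (s * L) ^ 2) / 2 := by ring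
  have hmid : |(1 + s * L + (s * L) ^ 2 / 2) - (1 + s * r + s * (s - 1) / 2 * r ^ 2)|
      ≤ s * (2 * r ^ 3) + s ^ 2 * r ^ 3 := by
    rw [hsplit]
    calc _ ≤ |s * (L - (r - r ^ 2 / 2))| + |((s * r) ^ 2 - (s * L) ^ 2) / 2| := abs_sub _ _
      _ = s * |L - (r - r ^ 2 / 2)| + |(s * r) ^ 2 - (s * L) ^ 2| / 2 := by
          rw [abs_mul, abs_div, abs_of_nonneg (by linarith : 0 ≤ s), abs_two]
      _ ≤ s * (2 * r ^ 3) + s ^ 2 * r ^ 3 := by gcongr; linarith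
  have hs3 : s ≤ 4 * s ^ 3 := by nlinarith
  have hs2 : s ^ 2 ≤ 2 * s ^ 3 := by nlinarith
  rw [Real.rpow_def_of_pos (by linarith), mul_comm]
  calc _ ≤ |exp (s * L) - (1 + s * L + (s * L) ^ 2 / 2)|
        + |(1 + s * L + (s * L) ^ 2 / 2) - (1 + s * r + s * (s - 1) / 2 * r ^ 2)| :=
        abs_sub_le _ _ _
    _ ≤ (s * r) ^ 3 + (s * (2 * r ^ 3) + s ^ 2 * r ^ 3) := add_le_add hexp hmid
    _ ≤ 11 * s ^ 3 * r ^ 3 := by nlinarith [pow_nonneg hr 3]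

lemma mul_log_div_lt_one {c x : ℝ} (hc : 0 ≤ c) (hx : (2 * c) ^ 2 < x) : c * log x / x < 1 := by
  have hx0 : 0 < x := lt_of_le_of_lt (sq_nonneg _) hx
  have hsqrt : 2 * c < √x := Real.lt_sqrt_of_sq_lt hx
  have hlog : log x ≤ 2 * √x := by
    simpa [Real.sqrt_eq_rpow, div_eq_mul_inv, mul_comm] using
      Real.log_le_rpow_div hx0.le (by norm_num : (0 : ℝ) < 1 / 2)
  rw [div_lt_one hx0]
  calc c * log x ≤ c * (2 * √x) := by gcongr
    _ < √x * √x := by nlinarith [Real.sqrt_pos.2 hx0]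
    _ = x := Real.mul_self_sqrt hx0.le

section Schedule

variable {T : ℕ} {c0 c1 : ℝ}

lemma alpha_mem_Ioo (hc0 : 0 < c0) (hc1 : 0 < c1) (hT : 1 < T)
    (hδ : c1 * log T / T < 1) (k : ℕ) : alpha T c0 c1 k ∈ Set.Ioo 0 1 := by
  have hT1 : (1 : ℝ) < T := by exact_mod_cast hT
  have hpow : 1 < (T : ℝ) ^ c0 := Real.one_lt_rpow hT1 hc0
  have hδ0 : 0 < c1 * log T / T := by have := Real.log_pos hT1; positivity
  suffices 0 < beta T c0 c1 k ∧ beta T c0 c1 k < 1 by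
    rw [alpha]; constructor <;> linarith
  unfold beta
  split_ifs
  · exact ⟨by positivity, (div_lt_one (by linarith)).2 hpow⟩
  · have hmin : 0 < min (1 / (T : ℝ) ^ c0 * (1 + c1 * log T / T) ^ k) 1 :=
      lt_min (by positivity) one_pos
    exact ⟨mul_pos hδ0 hmin,
      (mul_le_of_le_one_right hδ0.le (min_le_right _ _)).trans_lt hδ⟩

lemma beta_eq_of_rpow_le_pow (hT : 0 < T) {t : ℕ} (ht : 2 ≤ t)
    (h : (T : ℝ) ^ c0 ≤ (1 + c1 * log T / T) ^ t) : beta T c0 c1 t = c1 * log T / T := by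
  have hpow : 0 < (T : ℝ) ^ c0 := Real.rpow_pos_of_pos (by exact_mod_cast hT) c0
  rw [beta, if_neg (by omega), min_eq_right, mul_one]
  rwa [one_div_mul_eq_div, le_div_iff₀ hpow, one_mul]

lemma alphaBar_succ (n : ℕ) :
    alphaBar T c0 c1 (n + 1) = alphaBar T c0 c1 n * alpha T c0 c1 (n + 1) :=
  Finset.prod_Icc_succ_top (by omega) _

lemma alphaBar_lt_one (hα : ∀ k, alpha T c0 c1 k ∈ Set.Ioo 0 1) {n : ℕ} (hn : 1 ≤ n) :
    alphaBar T c0 c1 n < 1 := by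
  obtain ⟨m, rfl⟩ := Nat.exists_eq_add_of_le' hn
  have hle : alphaBar T c0 c1 m ≤ 1 :=
    Finset.prod_le_one (fun k _ => (hα k).1.le) (fun k _ => (hα k).2.le)
  rw [alphaBar_succ]
  exact (mul_le_of_le_one_left (hα _).1.le hle).trans_lt (hα _).2

lemma alpha_sub_alphaBar_pos (hα : ∀ k, alpha T c0 c1 k ∈ Set.Ioo 0 1) {t : ℕ} (ht : 2 ≤ t) :
    0 < alpha T c0 c1 t - alphaBar T c0 c1 t := by
  obtain ⟨m, rfl⟩ := Nat.exists_eq_add_of_le' (by omega : 1 ≤ t)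
  rw [alphaBar_succ, ← one_sub_mul]
  exact mul_pos (sub_pos.2 (alphaBar_lt_one hα (by omega))) (hα _).1

lemma alphaBar_le_exp_neg_sum_beta (hα : ∀ k, 0 ≤ alpha T c0 c1 k) (n : ℕ) :
    alphaBar T c0 c1 n ≤ exp (-∑ k ∈ Finset.Icc 1 n, beta T c0 c1 k) := by
  rw [← Finset.sum_neg_distrib, Real.exp_sum]
  exact Finset.prod_le_prod (fun k _ => hα k) fun k _ => Real.one_sub_le_exp_neg _

lemma rate_lt_one (hT : 10 ^ 8 ≤ T) : 4000 * log T / T < 1 :=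
  mul_log_div_lt_one (by norm_num) (by norm_num; exact_mod_cast (by omega : 64000000 < T))

lemma beta_eq_rate (hT : 10 ^ 8 ≤ T) {k : ℕ} (hk : T / 1000 < k) :
    beta T 1 4000 k = 4000 * log T / T := by
  have hT1 : (1 : ℝ) ≤ T := by exact_mod_cast (by omega : 1 ≤ T)
  have hTk : (T : ℝ) ≤ 1000 * k := by
    exact_mod_cast (by omega : T ≤ 1000 * k)
  set δ := 4000 * log T / T with hδ
  have hlogT : 0 ≤ log T := Real.log_nonneg hT1
  have hδ0 : 0 ≤ δ := by positivity
  have hδ1 : δ < 1 := rate_lt_one hT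
  apply beta_eq_of_rpow_le_pow (by omega) (by omega)
  rw [Real.rpow_one, ← Real.log_le_log_iff (by positivity) (by positivity), Real.log_pow]
  have hlog : δ / 2 ≤ log (1 + δ) :=
    le_trans (by rw [div_le_div_iff₀ (by norm_num) (by linarith)]; nlinarith)
      (Real.le_log_one_add_of_nonneg hδ0)
  calc log T ≤ k * (δ / 2) := by
        rw [hδ, show (k : ℝ) * (4000 * log T / T / 2) = 2000 * k / T * log T by ring]
        exact le_mul_of_one_le_left hlogT (by rw [le_div_iff₀ (by positivity)]; linarith)
    _ ≤ k * log (1 + δ) := by gcongr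

lemma alphaBar_self_le_one_div_rpow (hT : 10 ^ 8 ≤ T) :
    alphaBar T 1 4000 T ≤ 1 / (T : ℝ) ^ (1000 : ℝ) := by
  have hT1 : (1 : ℝ) ≤ T := by exact_mod_cast (by omega : 1 ≤ T)
  have hT0 : (0 : ℝ) < T := by linarith
  have hlogT : 0 ≤ log T := Real.log_nonneg hT1
  have hα := alpha_mem_Ioo one_pos (by norm_num) (by omega) (rate_lt_one hT)
  have hβ : ∀ k, 0 ≤ beta T 1 4000 k := fun k => by
    have := (hα k).2; rw [alpha] at this; linarith
  have hK : 999 / 1000 * T ≤ ((T - T / 1000 : ℕ) : ℝ) := by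
    rw [Nat.cast_sub (Nat.div_le_self _ _)]
    linarith [Nat.cast_div_le (α := ℝ) (m := T) (n := 1000)]
  have hsum : 1000 * log T ≤ ∑ k ∈ Finset.Icc 1 T, beta T 1 4000 k :=
    calc 1000 * log T ≤ ((T - T / 1000 : ℕ) : ℝ) * (4000 * log T / T) := by
          rw [mul_div_assoc', le_div_iff₀ hT0]
          nlinarith [mul_le_mul_of_nonneg_right hK hlogT]
      _ = ∑ k ∈ Finset.Ioc (T / 1000) T, beta T 1 4000 k := by
          rw [Finset.sum_congr rfl fun k hk => beta_eq_rate hT (Finset.mem_Ioc.1 hk).1,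
            Finset.sum_const, Nat.card_Ioc, nsmul_eq_mul]
      _ ≤ ∑ k ∈ Finset.Icc 1 T, beta T 1 4000 k :=
          Finset.sum_le_sum_of_subset_of_nonneg
            (fun k hk => by simp only [Finset.mem_Ioc, Finset.mem_Icc] at hk ⊢; omega)
            fun k _ _ => hβ k
  calc alphaBar T 1 4000 T ≤ exp (-∑ k ∈ Finset.Icc 1 T, beta T 1 4000 k) :=
        alphaBar_le_exp_neg_sum_beta (fun k => (hα k).1.le) T
    _ ≤ exp (-(1000 * log T)) := by gcongr
    _ = 1 / (T : ℝ) ^ (1000 : ℝ) := by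
        rw [Real.rpow_def_of_pos hT0, one_div, ← Real.exp_neg, mul_comm]

end Schedule

/-- learning-rate properties (39), part 2: for all large enough `T`,
`ᾱ_T ≤ 1/T^{c₂}` for some constant `c₂ ≥ 1000`, and there is a universal `C > 0` such that
whenever `d (1-α_t)/(α_t-ᾱ_t) ≤ 1/C`, the quantity `((1-ᾱ_t)/(α_t-ᾱ_t))^{d/2}` equals
`1 + d(1-α_t)/(2(α_t-ᾱ_t)) + d(d-2)(1-α_t)²/(8(α_t-ᾱ_t)²)`
up to an error of `C d³ ((1-α_t)/(α_t-ᾱ_t))³`. -/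
theorem alphaBar_decay_and_ratio_expansion :
    ∃ c0 c1 c2 : ℝ, 0 < c0 ∧ 0 < c1 ∧ 1000 ≤ c2 ∧
      ∃ C : ℝ, 0 < C ∧
        ∃ T0 : ℕ, ∀ T : ℕ, T0 ≤ T →
          alphaBar T c0 c1 T ≤ 1 / (T : ℝ) ^ c2 ∧
            ∀ (d t : ℕ), 1 ≤ d → 2 ≤ t → t ≤ T →
              (d : ℝ) * (1 - alpha T c0 c1 t) / (alpha T c0 c1 t - alphaBar T c0 c1 t) ≤
                1 / C →
              |((1 - alphaBar T c0 c1 t) / (alpha T c0 c1 t - alphaBar T c0 c1 t)) ^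
                    ((d : ℝ) / 2) -
                  (1 + (d : ℝ) * (1 - alpha T c0 c1 t) /
                      (2 * (alpha T c0 c1 t - alphaBar T c0 c1 t)) +
                    (d : ℝ) * ((d : ℝ) - 2) * (1 - alpha T c0 c1 t) ^ 2 /
                      (8 * (alpha T c0 c1 t - alphaBar T c0 c1 t) ^ 2))| ≤
                C * (d : ℝ) ^ 3 *
                  ((1 - alpha T c0 c1 t) / (alpha T c0 c1 t - alphaBar T c0 c1 t)) ^ 3 := by
  refine ⟨1, 4000, 1000, one_pos, by norm_num, le_rfl, 4, by norm_num, 10 ^ 8,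
    fun T hT => ⟨alphaBar_self_le_one_div_rpow hT, fun d t hd ht _ hsmall => ?_⟩⟩
  have hα := alpha_mem_Ioo one_pos (by norm_num) (by omega) (rate_lt_one hT)
  have hAB := alpha_sub_alphaBar_pos hα ht
  set A := alpha T 1 4000 t
  set B := alphaBar T 1 4000 t
  set r := (1 - A) / (A - B) with hr
  have hr0 : 0 ≤ r := div_nonneg (by linarith [(hα t).2]) hAB.le
  have hd1 : (1 : ℝ) ≤ d := by exact_mod_cast hd
  have hdr : (d : ℝ) * r ≤ 1 / 4 := by rw [hr, ← mul_div_assoc]; exact hsmall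
  have hratio : (1 - B) / (A - B) = 1 + r := by
    rw [hr, one_add_div hAB.ne']; congr 1; ring
  have hquad : 1 + d * (1 - A) / (2 * (A - B)) + d * (d - 2) * (1 - A) ^ 2 / (8 * (A - B) ^ 2)
      = 1 + d / 2 * r + d / 2 * (d / 2 - 1) / 2 * r ^ 2 := by
    rw [hr]; field_simp; ring
  rw [hratio, hquad]
  calc _ ≤ 11 * (d / 2 : ℝ) ^ 3 * r ^ 3 :=
        abs_one_add_rpow_sub_quadratic_le (by linarith) hr0 (by linarith)
    _ ≤ 4 * d ^ 3 * r ^ 3 := by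
        nlinarith [pow_nonneg hr0 3, pow_pos (by linarith : (0 : ℝ) < d) 3]

end Paper
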